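/- Let G be a second countable étale groupoid and A ⊆ G^{(0)} a measurable invariant subset (r^{-1}(A) = s^{-1}(A)). If the restricted subgroupoids G_A = s^{-1}(A) and G_{G^{(0)}\A} are both Borel amenable, then G is Borel amenable; conversely, if G is Borel amenable then so is G_A. -/

import Mathlib

open Filter Topology

/-- A (bare) topological groupoid: arrows, units, range/source, composition, inversion. -/
structure TopGroupoid where
  carrier : Type
  units : Type
  topC : TopologicalSpace carrier
  topU : TopologicalSpace units
  r : carrier → units
  s : carrier → units
  unit : units → carrier
  comp : ∀ g h : carrier, s g = r h → carrier
  inv : carrier → carrier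
  r_unit : ∀ x, r (unit x) = x
  s_unit : ∀ x, s (unit x) = x
  r_inv : ∀ g, r (inv g) = s g
  s_inv : ∀ g, s (inv g) = r g
  r_comp : ∀ g h p, r (comp g h p) = r g
  s_comp : ∀ g h p, s (comp g h p) = s h
  assoc : ∀ g h k p₁ p₂ p₃ p₄, comp (comp g h p₁) k p₂ = comp g (comp h k p₃) p₄
  unit_comp : ∀ g p, comp (unit (r g)) g p = g
  comp_unit : ∀ g p, comp g (unit (s g)) p = g
  inv_comp : ∀ g p, comp (inv g) g p = unit (s g)
  comp_inv : ∀ g p, comp g (inv g) p = unit (r g)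

attribute [instance] TopGroupoid.topC TopGroupoid.topU

/-- `G` is étale and second countable. -/
def TopGroupoid.Etale (G : TopGroupoid) : Prop :=
  T2Space G.units ∧ SecondCountableTopology G.carrier ∧
    IsLocalHomeomorph G.r ∧ IsLocalHomeomorph G.s

/-- Borel amenability of a groupoid: a sequence of Borel systems of probability measures on
the range fibers which is asymptotically invariant. -/
def TopGroupoid.BorelAmenable (G : TopGroupoid) : Prop :=
  ∃ m : ℕ → G.carrier → ℝ,
    (∀ n g, 0 ≤ m n g) ∧
    (∀ n x, ∑' g : {g : G.carrier // G.r g = x}, m n g.1 = 1) ∧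
    (∀ n, @Measurable _ _ (borel G.carrier) Real.measurableSpace
        fun g : G.carrier => m n g) ∧
    ∀ g : G.carrier,
      Tendsto (fun n => ∑' h : {h : G.carrier // G.r h = G.r g},
          |m n (G.comp (G.inv g) h.1 (by rw [G.s_inv, h.2])) - m n h.1|)
        atTop (𝓝 0)

/-- The restriction of `G` to an invariant subset `A` of the unit space. -/
def TopGroupoid.restrict (G : TopGroupoid) (A : Set G.units)
    (hA : G.r ⁻¹' A = G.s ⁻¹' A) : TopGroupoid where
  carrier := {g : G.carrier // G.s g ∈ A}
  units := {x : G.units // x ∈ A}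
  topC := inferInstance
  topU := inferInstance
  r g := ⟨G.r g.1, by have : g.1 ∈ G.s ⁻¹' A := g.2; rw [← hA] at this; exact this⟩
  s g := ⟨G.s g.1, g.2⟩
  unit x := ⟨G.unit x.1, by rw [G.s_unit]; exact x.2⟩
  comp g h p := ⟨G.comp g.1 h.1 (congrArg Subtype.val p), by rw [G.s_comp]; exact h.2⟩
  inv g := ⟨G.inv g.1, by
    rw [G.s_inv]
    have : g.1 ∈ G.s ⁻¹' A := g.2; rw [← hA] at this; exact this⟩
  r_unit x := Subtype.ext (G.r_unit x.1)
  s_unit x := Subtype.ext (G.s_unit x.1)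
  r_inv g := Subtype.ext (G.r_inv g.1)
  s_inv g := Subtype.ext (G.s_inv g.1)
  r_comp g h p := Subtype.ext (G.r_comp g.1 h.1 _)
  s_comp g h p := Subtype.ext (G.s_comp g.1 h.1 _)
  assoc g h k p₁ p₂ p₃ p₄ := Subtype.ext
    (G.assoc g.1 h.1 k.1 _ _ (congrArg Subtype.val p₃) _)
  unit_comp g p := Subtype.ext (G.unit_comp g.1 (congrArg Subtype.val p))
  comp_unit g p := Subtype.ext (G.comp_unit g.1 (congrArg Subtype.val p))
  inv_comp g p := Subtype.ext (G.inv_comp g.1 (congrArg Subtype.val p))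
  comp_inv g p := Subtype.ext (G.comp_inv g.1 (congrArg Subtype.val p))



/-!
The unit space splits into the invariant pieces `A` and `Aᶜ`, and so does every `r`-fiber:
`r⁻¹(x)` lies entirely in `G_A` or entirely in `G_{Aᶜ}`. Hence the approximate invariant
systems of the two restrictions glue to one on `G`, and conversely a system on `G` restricts to
one on `G_A`. Measurability of the glued system uses that `s⁻¹(A)` is Borel since `s` is
continuous.
-/

open MeasureTheory

open Classical in
theorem Measurable.dite_borel {α : Type*} [TopologicalSpace α] {S : Set α}
    (hS : MeasurableSet[borel α] S) {f : S → ℝ} {g : ↥Sᶜ → ℝ}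
    (hf : Measurable[borel S] f) (hg : Measurable[borel ↥Sᶜ] g) :
    Measurable[borel α] fun x => if h : x ∈ S then f ⟨x, h⟩ else g ⟨x, h⟩ := by
  borelize α
  have hf' : Measurable f := by rwa [(Subtype.borelSpace S).measurable_eq]
  have hg' : Measurable g := by rwa [(Subtype.borelSpace Sᶜ).measurable_eq]
  exact hf'.dite hg' hS

namespace TopGroupoid

variable {G : TopGroupoid} {A : Set G.units} {hA : G.r ⁻¹' A = G.s ⁻¹' A}

def restrictFiberEquiv (hA : G.r ⁻¹' A = G.s ⁻¹' A) (x : (G.restrict A hA).units) :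
    {h : G.carrier // G.r h = x.1} ≃
      {h : (G.restrict A hA).carrier // (G.restrict A hA).r h = x} where
  toFun k := ⟨⟨k.1, (Set.ext_iff.mp hA k.1).mp (by rw [Set.mem_preimage, k.2]; exact x.2)⟩,
    Subtype.ext k.2⟩
  invFun h := ⟨h.1.1, congrArg Subtype.val h.2⟩
  left_inv _ := rfl
  right_inv _ := rfl

theorem tsum_restrict_fiber (hA : G.r ⁻¹' A = G.s ⁻¹' A) (f : G.carrier → ℝ)
    (x : (G.restrict A hA).units) :
    ∑' h : {h : (G.restrict A hA).carrier // (G.restrict A hA).r h = x}, f h.1.1 =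
      ∑' h : {h : G.carrier // G.r h = x.1}, f h :=
  ((restrictFiberEquiv hA x).tsum_eq fun h => f h.1.1).symm

theorem tsum_restrict_invariance (hA : G.r ⁻¹' A = G.s ⁻¹' A) (f : G.carrier → ℝ)
    (g : (G.restrict A hA).carrier) :
    ∑' h : {h : (G.restrict A hA).carrier // (G.restrict A hA).r h = (G.restrict A hA).r g},
        |f ((G.restrict A hA).comp ((G.restrict A hA).inv g) h.1
          (by rw [(G.restrict A hA).s_inv, h.2])).1 - f h.1.1| =
      ∑' h : {h : G.carrier // G.r h = G.r g.1},
        |f (G.comp (G.inv g.1) h.1 (by rw [G.s_inv, h.2])) - f h| :=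
  ((restrictFiberEquiv hA ((G.restrict A hA).r g)).tsum_eq fun h =>
    |f ((G.restrict A hA).comp ((G.restrict A hA).inv g) h.1
      (by rw [(G.restrict A hA).s_inv, h.2])).1 - f h.1.1|).symm

theorem BorelAmenable.restrict (hG : G.BorelAmenable) : (G.restrict A hA).BorelAmenable := by
  obtain ⟨m, hm_nonneg, hm_sum, hm_meas, hm_inv⟩ := hG
  refine ⟨fun n g => m n g.1, fun n g => hm_nonneg n g.1, fun n x => ?_,
    fun n => (hm_meas n).comp continuous_subtype_val.borel_measurable, fun g => ?_⟩
  · rw [tsum_restrict_fiber hA (m n), hm_sum]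
  · simpa only [tsum_restrict_invariance hA] using hm_inv g.1

open Classical in
noncomputable def glue (hA' : G.r ⁻¹' Aᶜ = G.s ⁻¹' Aᶜ)
    (mA : (G.restrict A hA).carrier → ℝ) (mB : (G.restrict Aᶜ hA').carrier → ℝ)
    (g : G.carrier) : ℝ :=
  if h : G.s g ∈ A then mA ⟨g, h⟩ else mB ⟨g, h⟩

variable {hA' : G.r ⁻¹' Aᶜ = G.s ⁻¹' Aᶜ}
  {mA : (G.restrict A hA).carrier → ℝ} {mB : (G.restrict Aᶜ hA').carrier → ℝ}

@[simp]
theorem glue_restrict (g : (G.restrict A hA).carrier) : glue hA' mA mB g.1 = mA g :=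
  dif_pos g.2

@[simp]
theorem glue_restrict_compl (g : (G.restrict Aᶜ hA').carrier) :
    glue hA' mA mB g.1 = mB g :=
  dif_neg g.2

theorem glue_nonneg (hmA : ∀ g, 0 ≤ mA g) (hmB : ∀ g, 0 ≤ mB g) (g : G.carrier) :
    0 ≤ glue hA' mA mB g := by
  unfold glue; split_ifs; exacts [hmA _, hmB _]

theorem measurable_glue (hs : Continuous G.s) (hmeas : MeasurableSet[borel G.units] A)
    (hmA : Measurable[borel _] mA) (hmB : Measurable[borel _] mB) :
    Measurable[borel G.carrier] (glue hA' mA mB) :=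
  Measurable.dite_borel (S := G.s ⁻¹' A) (hs.borel_measurable hmeas) hmA hmB

theorem tsum_glue_fiber (hA_sum : ∀ x, ∑' g : {g // (G.restrict A hA).r g = x}, mA g.1 = 1)
    (hB_sum : ∀ x, ∑' g : {g // (G.restrict Aᶜ hA').r g = x}, mB g.1 = 1) (x : G.units) :
    ∑' g : {g : G.carrier // G.r g = x}, glue hA' mA mB g = 1 := by
  by_cases hx : x ∈ A
  · refine (tsum_restrict_fiber hA (glue hA' mA mB) ⟨x, hx⟩).symm.trans ?_
    simpa only [glue_restrict] using hA_sum ⟨x, hx⟩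
  · refine (tsum_restrict_fiber hA' (glue hA' mA mB) ⟨x, hx⟩).symm.trans ?_
    simpa only [glue_restrict_compl] using hB_sum ⟨x, hx⟩

end TopGroupoid

open TopGroupoid

/-- for a second countable étale groupoid `G` and a measurable invariant
`A ⊆ G⁰`, if the restrictions `G_A` and `G_{G⁰ \ A}` are Borel amenable then so is `G`;
conversely Borel amenability of `G` passes to `G_A`. -/
theorem stmt16 (G : TopGroupoid) (hG : G.Etale) (A : Set G.units)
    (hmeas : @MeasurableSet _ (borel G.units) A)
    (hA : G.r ⁻¹' A = G.s ⁻¹' A)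
    (hA' : G.r ⁻¹' Aᶜ = G.s ⁻¹' Aᶜ) :
    ((G.restrict A hA).BorelAmenable → (G.restrict Aᶜ hA').BorelAmenable →
      G.BorelAmenable) ∧
    (G.BorelAmenable → (G.restrict A hA).BorelAmenable) := by
  refine ⟨?_, BorelAmenable.restrict⟩
  rintro ⟨mA, hA_nonneg, hA_sum, hA_meas, hA_inv⟩ ⟨mB, hB_nonneg, hB_sum, hB_meas, hB_inv⟩
  refine ⟨fun n => glue hA' (mA n) (mB n), fun n => glue_nonneg (hA_nonneg n) (hB_nonneg n),
    fun n => tsum_glue_fiber (hA_sum n) (hB_sum n),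
    fun n => measurable_glue hG.2.2.2.continuous hmeas (hA_meas n) (hB_meas n), fun g => ?_⟩
  by_cases hg : G.s g ∈ A
  · refine (hA_inv ⟨g, hg⟩).congr fun n =>
      Eq.trans ?_ (tsum_restrict_invariance hA _ ⟨g, hg⟩)
    simp only [glue_restrict]
  · refine (hB_inv ⟨g, hg⟩).congr fun n =>
      Eq.trans ?_ (tsum_restrict_invariance hA' _ ⟨g, hg⟩)
    simp only [glue_restrict_compl]
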